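/- Let G be a block graph in which every block has more than two vertices. Then for every integer q ≥ 0, Z_q(G) = Z(G). -/

import Mathlib

/-!
A zero forcing set wins the game with its own tokens, so `Z_q(G) ≤ Z(G)`. Conversely, against
an oracle that always returns a single component, all forces of the player are positive
semidefinite forces, so a winning strategy yields a PSD forcing set with no more vertices than
tokens. It remains to see that in a block graph whose blocks have at least three vertices every
PSD forcing set is a zero forcing set, i.e. that a PSD-completable position `X ≠ univ` admits a
standard force. Otherwise take a PSD force `u → v` whose side, the component of `v` in `G - u`,
is maximal. Two neighbours of `u` joined in `G - u` lie on a common cycle through `u`, hence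
in a common block, hence are adjacent; so a second unfilled neighbour `w` of `u` lies off the
side. The unfilled component of `w` receives a PSD force, which a third vertex of the block of
its forcing edge can take over, so it comes from some `u' ≠ u`; its side strictly contains the
side of `u → v`.
-/

namespace ZqForcing

variable {V : Type*}

/-- `u` forces `v` within the allowed vertex set `A`, given the filled set `F`:
`u` is filled, `v` is its unique unfilled neighbor inside `A`. -/
def forceIn (G : SimpleGraph V) (A F : Set V) (u v : V) : Prop :=
  u ∈ A ∧ v ∈ A ∧ u ∈ F ∧ v ∉ F ∧ G.Adj u v ∧
    ∀ w ∈ A, G.Adj u w → w ∉ F → w = v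

/-- One step of the standard zero forcing color change rule. -/
def zfStep (G : SimpleGraph V) (F F' : Set V) : Prop :=
  ∃ u v, forceIn G Set.univ F u v ∧ F' = insert v F

/-- `S` is a zero forcing set: repeated color changes fill all of `V`. -/
def IsZeroForcingSet (G : SimpleGraph V) (S : Set V) : Prop :=
  Relation.ReflTransGen (zfStep G) S Set.univ

/-- The zero forcing number `Z(G)`. -/
noncomputable def zeroForcingNumber (G : SimpleGraph V) : ℕ :=
  sInf {n | ∃ S : Set V, S.ncard = n ∧ IsZeroForcingSet G S}

/-- Reachability in `G - F`, i.e. through vertices avoiding `F`. -/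
def reachAvoid (G : SimpleGraph V) (F : Set V) : V → V → Prop :=
  Relation.ReflTransGen (fun a b => G.Adj a b ∧ a ∉ F ∧ b ∉ F)

/-- The positive semidefinite color change rule: filled `u` forces unfilled `v` when `v`
is the unique neighbor of `u` in the connected component of `G - F` containing `v`. -/
def psdForce (G : SimpleGraph V) (F : Set V) (u v : V) : Prop :=
  u ∈ F ∧ v ∉ F ∧ G.Adj u v ∧
    ∀ w, G.Adj u w → w ∉ F → reachAvoid G F v w → w = v

/-- One step of the positive semidefinite color change rule. -/
def psdStep (G : SimpleGraph V) (F F' : Set V) : Prop :=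
  ∃ u v, psdForce G F u v ∧ F' = insert v F

/-- `S` is a positive semidefinite zero forcing set. -/
def IsPSDForcingSet (G : SimpleGraph V) (S : Set V) : Prop :=
  Relation.ReflTransGen (psdStep G) S Set.univ

/-- The positive semidefinite zero forcing number `Z₊(G)`. -/
noncomputable def psdZeroForcingNumber (G : SimpleGraph V) : ℕ :=
  sInf {n | ∃ S : Set V, S.ncard = n ∧ IsPSDForcingSet G S}

/-- The vertex sets of the connected components of the subgraph induced on
the unfilled vertices. -/
def unfilledComponents (G : SimpleGraph V) (F : Set V) : Set (Set V) :=
  {C | ∃ v, v ∉ F ∧ C = {w | reachAvoid G F v w}}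

/-- A forcing step performed inside the induced subgraph on the vertex set `A`. -/
def rule3Step (G : SimpleGraph V) (A F F' : Set V) : Prop :=
  ∃ u v, forceIn G A F u v ∧ F' = insert v F

/-- `ZqWinFrom G q F t`: starting from the filled set `F`, the player can guarantee to
fill all vertices using at most `t` further tokens against every oracle strategy, in the
`q`-analogue zero forcing game. -/
inductive ZqWinFrom (G : SimpleGraph V) (q : ℕ) : Set V → ℕ → Prop
  | done (t : ℕ) : ZqWinFrom G q Set.univ t
  | rule1 {F : Set V} {t : ℕ} (v : V) (hv : v ∉ F)
      (h : ZqWinFrom G q (insert v F) t) : ZqWinFrom G q F (t + 1)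
  | rule2 {F : Set V} {t : ℕ} (u v : V) (huv : forceIn G Set.univ F u v)
      (h : ZqWinFrom G q (insert v F) t) : ZqWinFrom G q F t
  | rule3 {F : Set V} {t : ℕ} (𝒞 : Set (Set V))
      (h𝒞 : 𝒞 ⊆ unfilledComponents G F) (hcard : q + 1 ≤ 𝒞.ncard)
      (next : ∀ 𝒮 : Set (Set V), 𝒮 ⊆ 𝒞 → 𝒮.Nonempty → Set V)
      (hnext : ∀ (𝒮 : Set (Set V)) (h1 : 𝒮 ⊆ 𝒞) (h2 : 𝒮.Nonempty),
        Relation.ReflTransGen (rule3Step G (F ∪ ⋃₀ 𝒮)) F (next 𝒮 h1 h2))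
      (h : ∀ (𝒮 : Set (Set V)) (h1 : 𝒮 ⊆ 𝒞) (h2 : 𝒮.Nonempty),
        ZqWinFrom G q (next 𝒮 h1 h2) t) :
      ZqWinFrom G q F t

/-- The `q`-analogue zero forcing number `Z_q(G)`. -/
noncomputable def qZeroForcingNumber (G : SimpleGraph V) (q : ℕ) : ℕ :=
  sInf {t | ZqWinFrom G q ∅ t}

/-- The induced subgraph on `B` is connected and has no cut vertex. -/
def NoCutVertex (G : SimpleGraph V) (B : Set V) : Prop :=
  (G.induce B).Connected ∧
    ∀ v ∈ B, (B \ {v}).Nonempty → (G.induce (B \ {v})).Connected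

/-- `B` is a block of `G`: a maximal (vertex set of a) connected subgraph without
a cut vertex. -/
def IsBlock (G : SimpleGraph V) (B : Set V) : Prop :=
  NoCutVertex G B ∧ ∀ B' : Set V, B ⊆ B' → NoCutVertex G B' → B' = B

/-- A block graph: a connected graph each of whose blocks is a clique. -/
def IsBlockGraph (G : SimpleGraph V) : Prop :=
  G.Connected ∧ ∀ B : Set V, IsBlock G B → G.IsClique B

/-- A cactus graph: connected, and every edge lies on at most one cycle
(cycles being identified when they have the same edge set). -/
def IsCactus (G : SimpleGraph V) : Prop :=
  G.Connected ∧ ∀ (a b : V) (c : G.Walk a a) (d : G.Walk b b),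
    c.IsCycle → d.IsCycle → ∀ e ∈ c.edges, e ∈ d.edges →
      ∀ e', e' ∈ c.edges ↔ e' ∈ d.edges

/-- `c` is an induced (chordless) cycle of `G`. -/
def IsInducedCycle (G : SimpleGraph V) {v : V} (c : G.Walk v v) : Prop :=
  c.IsCycle ∧ ∀ x ∈ c.support, ∀ y ∈ c.support, G.Adj x y → s(x, y) ∈ c.edges

/-- Generalized windmill graph of Type I: η disjoint copies of `K_k` together with
`l` central vertices forming a clique, each central vertex adjacent to everything. -/
def windmillI (η k l : ℕ) : SimpleGraph ((Fin η × Fin k) ⊕ Fin l) :=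
  SimpleGraph.fromRel (fun a b =>
    match a, b with
    | Sum.inl (i, _), Sum.inl (i', _) => i = i'
    | Sum.inr _, Sum.inr _ => True
    | _, _ => True)

/-- Generalized windmill graph of Type II: η disjoint copies of `K_k` together with
`l` pairwise nonadjacent central vertices, each adjacent to every clique vertex. -/
def windmillII (η k l : ℕ) : SimpleGraph ((Fin η × Fin k) ⊕ Fin l) :=
  SimpleGraph.fromRel (fun a b =>
    match a, b with
    | Sum.inl (i, _), Sum.inl (i', _) => i = i'
    | Sum.inr _, Sum.inr _ => False
    | _, _ => True)

/-- Generalized star (spider) graph: a center `none` together with `k` disjoint paths,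
the `i`-th of length `m i`, attached to the center at one endpoint. -/
def spider {k : ℕ} (m : Fin k → ℕ) : SimpleGraph (Option (Σ i : Fin k, Fin (m i))) :=
  SimpleGraph.fromRel (fun a b =>
    match a, b with
    | none, some ⟨_, j⟩ => j.val = 0
    | some ⟨i, j⟩, some ⟨i', j'⟩ => i = i' ∧ j.val + 1 = j'.val
    | _, _ => False)


open Relation SimpleGraph

variable {G : SimpleGraph V}

section ReachAvoid

variable {X Y : Set V} {a b : V}

lemma reachAvoid_mono (hXY : X ⊆ Y) (h : reachAvoid G Y a b) : reachAvoid G X a b := by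
  induction h with
  | refl => exact .refl
  | tail _ hs ih => exact ih.tail ⟨hs.1, fun h => hs.2.1 (hXY h), fun h => hs.2.2 (hXY h)⟩

lemma reachAvoid_symm (h : reachAvoid G X a b) : reachAvoid G X b a := by
  induction h with
  | refl => exact .refl
  | tail _ hs ih => exact .head ⟨hs.1.symm, hs.2.2, hs.2.1⟩ ih

lemma reachAvoid_notMem (h : reachAvoid G X a b) (ha : a ∉ X) : b ∉ X := by
  induction h with
  | refl => exact ha
  | tail _ hs _ => exact hs.2.2

lemma exists_walk_of_reachAvoid (h : reachAvoid G X a b) (ha : a ∉ X) :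
    ∃ p : G.Walk a b, ∀ z ∈ p.support, z ∉ X := by
  induction h with
  | refl => exact ⟨.nil, by simpa using ha⟩
  | tail _ hs ih =>
    obtain ⟨p, hp⟩ := ih
    refine ⟨p.concat hs.1, fun z hz => ?_⟩
    rw [Walk.support_concat, List.mem_append, List.mem_singleton] at hz
    exact hz.elim (hp z) fun h => h ▸ hs.2.2

/-- When `a ∈ X` this is `{a}`, not a component of `G - X`. -/
def compAvoid (G : SimpleGraph V) (X : Set V) (a : V) : Set V := {b | reachAvoid G X a b}

lemma compAvoid_subset_compAvoid (h : ∀ z ∈ compAvoid G X a, z ∉ Y) :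
    compAvoid G X a ⊆ compAvoid G Y a := by
  intro b hb
  induction hb with
  | refl => exact .refl
  | @tail b c hab hs ih => exact ih.tail ⟨hs.1, h b hab, h c (hab.tail hs)⟩

lemma compAvoid_subset_insert {v : V} (ha : a ∉ X) (hv : v ∉ compAvoid G X a) :
    compAvoid G X a ⊆ compAvoid G (insert v X) a :=
  compAvoid_subset_compAvoid fun _ hz hzX =>
    hzX.elim (fun h => hv (h ▸ hz)) (reachAvoid_notMem hz ha)

end ReachAvoid

section Walks

variable {a b r t u z : V}

lemma _root_.SimpleGraph.Walk.IsPath.notMem_takeUntil_or_notMem_dropUntil [DecidableEq V]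
    {p : G.Walk a b} (hp : p.IsPath) (ht : t ∈ p.support) (hrt : r ≠ t) :
    r ∉ (p.takeUntil t ht).support ∨ r ∉ (p.dropUntil t ht).support := by
  have hnodup := hp.support_nodup
  rw [← p.take_spec ht, Walk.support_append] at hnodup
  rw [or_iff_not_and_not, not_not, not_not, ← Walk.cons_tail_support (p.dropUntil t ht)]
  rintro ⟨hr₁, hr₂⟩
  exact List.disjoint_of_nodup_append hnodup hr₁ ((List.mem_cons.mp hr₂).resolve_left hrt)

lemma connected_induce_insert_support (p : G.Walk a b) (hz : z ∈ p.support) (huz : G.Adj u z) :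
    (G.induce (insert u {w | w ∈ p.support})).Connected := by
  rw [← Set.singleton_union]
  have hu : (G.induce {u}).Preconnected := by
    rw [induce_singleton_eq_top]
    exact connected_top.preconnected
  exact connected_induce_union hu p.connected_induce_support.preconnected rfl hz huz

/-- Removing `u` leaves the path; removing a vertex `r` of the path, every other vertex still
reaches `u` through the endpoint on its side of `r`. -/
lemma noCutVertex_insert_support [DecidableEq V] {p : G.Walk a b} (hp : p.IsPath)
    (hu : u ∉ p.support) (hua : G.Adj u a) (hub : G.Adj u b) :
    NoCutVertex G (insert u {w | w ∈ p.support}) := by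
  refine ⟨connected_induce_insert_support p p.start_mem_support hua, fun r hr _ => ?_⟩
  rcases hr with hru | hr
  · rw [hru, Set.insert_sdiff_self_of_notMem (s := {w | w ∈ p.support}) hu]
    exact p.connected_induce_support
  have hur : u ≠ r := fun h => hu (h ▸ hr)
  refine induce_connected_of_patches u ⟨Or.inl rfl, hur⟩ fun {t} ht => ?_
  rcases ht with ⟨htu | ht, htr⟩
  · exact ⟨{u}, by simpa using hur, rfl, htu, by subst htu; rfl⟩
  have piece : ∀ {c d : V} (q : G.Walk c d), (∀ w ∈ q.support, w ∈ p.support) →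
      r ∉ q.support → t ∈ q.support → ∀ w ∈ q.support, G.Adj u w →
      ∃ s' ⊆ insert u {w | w ∈ p.support} \ {r}, ∃ (hu' : u ∈ s') (ht' : t ∈ s'),
        (G.induce s').Reachable ⟨u, hu'⟩ ⟨t, ht'⟩ := by
    intro c d q hqp hrq htq w hw huw
    refine ⟨insert u {w | w ∈ q.support}, ?_, Or.inl rfl, Or.inr htq,
      (connected_induce_insert_support q hw huw).preconnected _ _⟩
    rintro x (rfl | hx)
    · exact ⟨Or.inl rfl, hur⟩
    · exact ⟨Or.inr (hqp x hx), fun h => hrq ((Set.mem_singleton_iff.mp h) ▸ hx)⟩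
  rcases hp.notMem_takeUntil_or_notMem_dropUntil ht (Ne.symm htr) with hr' | hr'
  · exact piece (p.takeUntil t ht) (fun _ h => p.support_takeUntil_subset_support ht h) hr'
      (p.takeUntil t ht).end_mem_support a (p.takeUntil t ht).start_mem_support hua
  · exact piece (p.dropUntil t ht) (fun _ h => p.support_dropUntil_subset_support ht h) hr'
      (p.dropUntil t ht).start_mem_support b (p.dropUntil t ht).end_mem_support hub

end Walks

section BlockGraph

variable {A : Set V} {u x y : V}

lemma _root_.SimpleGraph.IsClique.induce_connected (hA : G.IsClique A) (hne : A.Nonempty) :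
    (G.induce A).Connected := by
  have := hne.to_subtype
  rw [induce_eq_top.mpr hA]
  exact connected_top

lemma noCutVertex_of_isClique (hA : G.IsClique A) (hne : A.Nonempty) : NoCutVertex G A :=
  ⟨hA.induce_connected hne, fun _ _ hne' => (hA.subset Set.sdiff_subset).induce_connected hne'⟩

lemma exists_isBlock_superset [Finite V] (hA : NoCutVertex G A) :
    ∃ B, A ⊆ B ∧ IsBlock G B := by
  obtain ⟨B, ⟨hAB, hB⟩, hmax⟩ := Set.Finite.exists_maximalFor id
    {B : Set V | A ⊆ B ∧ NoCutVertex G B} (Set.toFinite _) ⟨A, subset_rfl, hA⟩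
  exact ⟨B, hAB, hB, fun B' hBB' hB' => (hmax ⟨hAB.trans hBB', hB'⟩ hBB').antisymm hBB'⟩

lemma IsBlockGraph.isClique_of_noCutVertex [Finite V] (hG : IsBlockGraph G)
    (hA : NoCutVertex G A) : G.IsClique A :=
  let ⟨B, hAB, hB⟩ := exists_isBlock_superset hA
  (hG.2 B hB).subset hAB

lemma IsBlockGraph.exists_common_neighbor [Finite V] (hG : IsBlockGraph G)
    (hbig : ∀ B : Set V, IsBlock G B → 2 < B.ncard) (hxy : G.Adj x y) :
    ∃ z, G.Adj z x ∧ G.Adj z y := by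
  obtain ⟨B, hxyB, hB⟩ := exists_isBlock_superset
    (noCutVertex_of_isClique (isClique_pair.mpr fun _ => hxy) ⟨x, Set.mem_insert _ _⟩)
  obtain ⟨z, hzB, hz⟩ := Set.exists_mem_notMem_of_ncard_lt_ncard
    ((Set.ncard_pair hxy.ne).trans_lt (hbig B hB))
  simp only [Set.mem_insert_iff, Set.mem_singleton_iff, not_or] at hz
  have hxB := hxyB (Set.mem_insert x {y})
  have hyB := hxyB (Set.mem_insert_of_mem x rfl)
  exact ⟨z, hG.2 B hB hzB hxB hz.1, hG.2 B hB hzB hyB hz.2⟩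

lemma IsBlockGraph.adj_of_reachAvoid [Finite V] {X : Set V} (hG : IsBlockGraph G)
    (hux : G.Adj u x) (huy : G.Adj u y) (hxy : x ≠ y) (hu : u ∈ X)
    (h : reachAvoid G X x y) (hx : x ∉ X) : G.Adj x y := by
  classical
  obtain ⟨p, hp⟩ := exists_walk_of_reachAvoid h hx
  have hcyc := noCutVertex_insert_support p.bypass_isPath
    (fun h => hp u (p.support_bypass_subset_support h) hu) hux huy
  exact hG.isClique_of_noCutVertex hcyc (Or.inr p.bypass.start_mem_support)
    (Or.inr p.bypass.end_mem_support) hxy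

end BlockGraph

section PSD

variable {X Y : Set V} {d u v : V}

lemma IsPSDForcingSet.mono (h : IsPSDForcingSet G X) (hXY : X ⊆ Y) : IsPSDForcingSet G Y := by
  unfold IsPSDForcingSet at *
  induction h using ReflTransGen.head_induction_on generalizing Y with
  | refl => rw [Set.univ_subset_iff.mp hXY]
  | head hstep _ ih =>
    obtain ⟨u, v, ⟨hu, hv, huv, hforce⟩, rfl⟩ := hstep
    by_cases hvY : v ∈ Y
    · exact ih (Set.insert_subset hvY hXY)
    · refine .head ⟨u, v, ⟨hXY hu, hvY, huv, fun w huw hwY hvw => ?_⟩, rfl⟩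
        (ih (Set.insert_subset_insert hXY))
      exact hforce w huw (fun h => hwY (hXY h)) (reachAvoid_mono hXY hvw)

/-- The component of `d` stays a component of the unfilled vertices until the chain first
forces into it, and that force is already valid at `X`. -/
lemma IsPSDForcingSet.exists_psdForce_mem (h : IsPSDForcingSet G X) (hd : d ∉ X) :
    ∃ u v, psdForce G X u v ∧ v ∈ compAvoid G X d := by
  unfold IsPSDForcingSet at h
  induction h using ReflTransGen.head_induction_on generalizing d with
  | refl => exact absurd trivial hd
  | @head X _ hstep _ ih =>
    obtain ⟨u, v, huv, rfl⟩ := hstep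
    by_cases hvD : v ∈ compAvoid G X d
    · exact ⟨u, v, huv, hvD⟩
    obtain ⟨u₁, v₁, h₁, hv₁⟩ := ih fun h => h.elim (fun h => hvD (h ▸ .refl)) hd
    have hv₁D : v₁ ∈ compAvoid G X d := reachAvoid_mono (Set.subset_insert _ _) hv₁
    have hv₁X : v₁ ∉ X := reachAvoid_notMem hv₁D hd
    have hvv₁ : v ∉ compAvoid G X v₁ := fun h => hvD (hv₁D.trans h)
    refine ⟨u₁, v₁, ⟨?_, hv₁X, h₁.2.2.1, fun w huw hw hv₁w => ?_⟩, hv₁D⟩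
    · exact h₁.1.resolve_left fun h =>
        hvD (hv₁D.tail ⟨h ▸ h₁.2.2.1.symm, hv₁X, huv.2.1⟩)
    · exact h₁.2.2.2 w huw (fun h => h.elim (fun h => hvv₁ (h ▸ hv₁w)) hw)
        (compAvoid_subset_insert hv₁X hvv₁ hv₁w)

lemma psdForce.exists_partner [Finite V] (hG : IsBlockGraph G)
    (hbig : ∀ B : Set V, IsBlock G B → 2 < B.ncard) (hf : psdForce G X u v) :
    ∃ z, z ≠ u ∧ psdForce G X z v := by
  obtain ⟨hu, hv, huv, hforce⟩ := hf
  obtain ⟨z, hzu, hzv⟩ := hG.exists_common_neighbor hbig huv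
  have hzX : z ∈ X := by
    by_contra hzX
    exact hzv.ne (hforce z hzu.symm hzX (.single ⟨hzv.symm, hv, hzX⟩))
  refine ⟨z, hzu.ne, hzX, hv, hzv, fun y hzy hy hvy => ?_⟩
  by_contra hyv
  have hvy' : G.Adj v y := hG.adj_of_reachAvoid hzv hzy (Ne.symm hyv) hzX hvy hv
  have huy : G.Adj u y := hG.adj_of_reachAvoid (X := {v}) huv.symm hvy'
    (fun h => hy (h ▸ hu)) rfl
    (.head ⟨hzu.symm, huv.ne, hzv.ne⟩ (.single ⟨hzy, hzv.ne, hyv⟩)) huv.ne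
  exact hyv (hforce y huy hy hvy)

end PSD

section StandardForce

variable {X : Set V} {u u' v v₁ w : V}

lemma compAvoid_singleton_ssubset (hu : u ∈ X) (hu' : u' ∈ X) (hne : u' ≠ u)
    (huv : G.Adj u v) (huw : G.Adj u w) (hw : w ∉ X) (hwS : w ∉ compAvoid G {u} v)
    (hu'v₁ : G.Adj u' v₁) (hv₁ : v₁ ∈ compAvoid G X w) :
    compAvoid G {u} v ⊂ compAvoid G {u'} v₁ := by
  have hv₁X : v₁ ∉ X := reachAvoid_notMem hv₁ hw
  have hu'S : u' ∉ compAvoid G {u} v := fun h =>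
    hwS <| (h.tail ⟨hu'v₁, hne, fun e => hv₁X (e ▸ hu)⟩).trans
      (reachAvoid_symm (reachAvoid_mono (Set.singleton_subset_iff.mpr hu) hv₁))
  have huS' : u ∈ compAvoid G {u'} v₁ :=
    (reachAvoid_symm (reachAvoid_mono (Set.singleton_subset_iff.mpr hu') hv₁)).tail
      ⟨huw.symm, fun e => hw (e ▸ hu'), hne.symm⟩
  have hvS' : v ∈ compAvoid G {u'} v₁ :=
    huS'.tail ⟨huv, hne.symm, fun e => hu'S (e ▸ .refl)⟩
  refine ssubset_of_subset_not_superset (fun x hx => hvS'.trans ?_) fun h => ?_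
  · exact compAvoid_subset_compAvoid (Y := {u'}) (fun z hz e => hu'S (e ▸ hz)) hx
  · exact reachAvoid_notMem (h huS') huv.ne.symm rfl

/-- `u` has a second unfilled neighbour `w` off the side `compAvoid G {u} v`, and a PSD force
`u' → v₁` into the component of `w` with `u' ≠ u` has a strictly larger side. -/
lemma exists_psdForce_compAvoid_ssubset [Finite V] (hG : IsBlockGraph G)
    (hbig : ∀ B : Set V, IsBlock G B → 2 < B.ncard)
    (hdoor : ∀ d ∉ X, ∃ u v, psdForce G X u v ∧ v ∈ compAvoid G X d)
    (hno : ¬ ∃ u v, forceIn G Set.univ X u v) (hf : psdForce G X u v) :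
    ∃ u' v', psdForce G X u' v' ∧ compAvoid G {u} v ⊂ compAvoid G {u'} v' := by
  obtain ⟨hu, hv, huv, hforce⟩ := hf
  obtain ⟨w, huw, hw, hwv⟩ : ∃ w, G.Adj u w ∧ w ∉ X ∧ w ≠ v := by
    by_contra! h
    exact hno ⟨u, v, trivial, trivial, hu, hv, huv, fun w _ => h w⟩
  have hwS : w ∉ compAvoid G {u} v := fun h =>
    have hvw := hG.adj_of_reachAvoid (X := {u}) huv huw hwv.symm rfl h huv.ne.symm
    hwv (hforce w huw hw (.single ⟨hvw, hv, hw⟩))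
  obtain ⟨u₁, v₁, hf₁, hv₁⟩ := hdoor w hw
  obtain ⟨u', hne, hf'⟩ : ∃ u', u' ≠ u ∧ psdForce G X u' v₁ := by
    obtain rfl | h := eq_or_ne u₁ u
    · exact hf₁.exists_partner hG hbig
    · exact ⟨u₁, h, hf₁⟩
  exact ⟨u', v₁, hf', compAvoid_singleton_ssubset hu hf'.1 hne huv huw hw hwS hf'.2.2.1 hv₁⟩

lemma IsPSDForcingSet.exists_forceIn [Finite V] (hG : IsBlockGraph G)
    (hbig : ∀ B : Set V, IsBlock G B → 2 < B.ncard) (h : IsPSDForcingSet G X)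
    (hX : X ≠ Set.univ) : ∃ u v, forceIn G Set.univ X u v := by
  by_contra hno
  obtain ⟨d, hd⟩ := (Set.ne_univ_iff_exists_notMem X).mp hX
  obtain ⟨u₀, v₀, hf₀, -⟩ := h.exists_psdForce_mem hd
  obtain ⟨⟨u, v⟩, hf, hmax⟩ := Set.Finite.exists_maximalFor
    (fun e : V × V => compAvoid G {e.1} e.2) {e | psdForce G X e.1 e.2} (Set.toFinite _)
    ⟨(u₀, v₀), hf₀⟩
  obtain ⟨u', v', hf', hlt⟩ :=
    exists_psdForce_compAvoid_ssubset hG hbig (fun _ hd => h.exists_psdForce_mem hd) hno hf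
  exact hlt.not_subset (hmax (j := (u', v')) hf' hlt.subset)

lemma IsPSDForcingSet.isZeroForcingSet [Finite V] (hG : IsBlockGraph G)
    (hbig : ∀ B : Set V, IsBlock G B → 2 < B.ncard) (h : IsPSDForcingSet G X) :
    IsZeroForcingSet G X := by
  induction X using WellFoundedGT.induction with
  | _ X ih =>
    by_cases hX : X = Set.univ
    · exact hX ▸ .refl
    obtain ⟨u, v, hf⟩ := h.exists_forceIn hG hbig hX
    have hlt : X < insert v X := Set.ssubset_insert hf.2.2.2.1
    exact .head ⟨u, v, hf, rfl⟩ (ih _ hlt (h.mono hlt.le))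

end StandardForce

section Game

variable {q t t' : ℕ} {A C F M N S : Set V} {a u v : V}

lemma ZqWinFrom.mono (h : ZqWinFrom G q F t) (htt : t ≤ t') : ZqWinFrom G q F t' := by
  induction h generalizing t' with
  | done => exact .done _
  | rule1 v hv _ ih =>
    obtain ⟨s, rfl⟩ : ∃ s, t' = s + 1 := ⟨t' - 1, by omega⟩
    exact .rule1 v hv (ih (by omega))
  | rule2 u v huv _ ih => exact .rule2 u v huv (ih htt)
  | rule3 𝒞 h𝒞 hcard next hnext _ ih =>
    exact .rule3 𝒞 h𝒞 hcard next hnext fun 𝒮 h1 h2 => ih 𝒮 h1 h2 htt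

lemma ZqWinFrom.of_insert (h : ZqWinFrom G q (insert a F) t) : ZqWinFrom G q F (t + 1) := by
  by_cases ha : a ∈ F
  · exact (Set.insert_eq_of_mem ha ▸ h).mono t.le_succ
  · exact .rule1 a ha h

lemma ZqWinFrom.of_union (hS : S.Finite) (h : ZqWinFrom G q (F ∪ S) t) :
    ZqWinFrom G q F (t + S.ncard) := by
  induction S, hS using Set.Finite.induction_on generalizing F with
  | empty => simpa using h
  | @insert a S ha hS ih =>
    rw [Set.ncard_insert_of_notMem ha hS, ← add_assoc]
    exact (ih (by rwa [Set.insert_union, ← Set.union_insert])).of_insert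

lemma zqWinFrom_empty_of_isZeroForcingSet [Finite V] (hS : IsZeroForcingSet G S) :
    ZqWinFrom G q ∅ S.ncard := by
  have hwin : ZqWinFrom G q S 0 := by
    induction hS using ReflTransGen.head_induction_on with
    | refl => exact .done 0
    | head hstep _ ih =>
      obtain ⟨u, v, huv, rfl⟩ := hstep
      exact .rule2 u v huv ih
  simpa using (show ZqWinFrom G q (∅ ∪ S) 0 by rwa [Set.empty_union]).of_union S.toFinite

lemma psdSteps_union_of_forceIn (hf : forceIn G A M u v) (hA : compAvoid G (M ∪ S) v ⊆ A) :
    ReflTransGen (psdStep G) (M ∪ S) (insert v M ∪ S) := by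
  obtain ⟨-, -, hu, hv, huv, hforce⟩ := hf
  by_cases hvS : v ∈ S
  · rw [Set.insert_union, Set.insert_eq_of_mem (Set.mem_union_right M hvS)]
  refine .single ⟨u, v, ⟨Or.inl hu, fun h => h.elim hv hvS, huv, fun w huw hw hvw => ?_⟩,
    Set.insert_union⟩
  exact hforce w (hA hvw) huw fun h => hw (Or.inl h)

lemma psdSteps_union_of_rule3Steps (hC : C ∈ unfilledComponents G F)
    (h : ReflTransGen (rule3Step G (F ∪ C)) F N) :
    ReflTransGen (psdStep G) (F ∪ S) (N ∪ S) := by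
  obtain ⟨d, -, rfl⟩ := hC
  suffices F ⊆ N ∧ ReflTransGen (psdStep G) (F ∪ S) (N ∪ S) from this.2
  induction h with
  | refl => exact ⟨subset_rfl, .refl⟩
  | tail _ hstep ih =>
    obtain ⟨hFM, hpsd⟩ := ih
    obtain ⟨u, v, hf, rfl⟩ := hstep
    have hvD : v ∈ compAvoid G F d := hf.2.1.resolve_left fun h => hf.2.2.2.1 (hFM h)
    refine ⟨hFM.trans (Set.subset_insert _ _), hpsd.trans (psdSteps_union_of_forceIn hf ?_)⟩
    exact fun w hw => Or.inr (hvD.trans (reachAvoid_mono (hFM.trans Set.subset_union_left) hw))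

lemma ZqWinFrom.exists_isPSDForcingSet (h : ZqWinFrom G q F t) :
    ∃ S : Set V, S.ncard ≤ t ∧ IsPSDForcingSet G (F ∪ S) := by
  induction h with
  | done t => exact ⟨∅, by simp, by rw [Set.union_empty]; exact .refl⟩
  | @rule1 F t v _ _ ih =>
    obtain ⟨S, hS, hpsd⟩ := ih
    refine ⟨insert v S, (Set.ncard_insert_le _ _).trans (by omega), ?_⟩
    rwa [Set.union_insert, ← Set.insert_union]
  | rule2 u v huv _ ih =>
    obtain ⟨S, hS, hpsd⟩ := ih
    exact ⟨S, hS, (psdSteps_union_of_forceIn huv (Set.subset_univ _)).trans hpsd⟩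
  | @rule3 F t 𝒞 h𝒞 hcard next hnext _ ih =>
    obtain ⟨C, hC⟩ : 𝒞.Nonempty := Set.nonempty_of_ncard_ne_zero (by omega)
    have h1 : {C} ⊆ 𝒞 := Set.singleton_subset_iff.mpr hC
    obtain ⟨S, hS, hpsd⟩ := ih {C} h1 (Set.singleton_nonempty C)
    have hsteps := hnext {C} h1 (Set.singleton_nonempty C)
    rw [Set.sUnion_singleton] at hsteps
    exact ⟨S, hS, (psdSteps_union_of_rule3Steps (h𝒞 hC) hsteps).trans hpsd⟩

end Game

/-- for a block graph all of whose blocks have more than two vertices,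
`Z_q(G) = Z(G)` for every `q ≥ 0`. -/
theorem stmt8 {V : Type*} [Fintype V] (G : SimpleGraph V)
    (hG : IsBlockGraph G) (hbig : ∀ B : Set V, IsBlock G B → 2 < B.ncard)
    (q : ℕ) : qZeroForcingNumber G q = zeroForcingNumber G := by
  have hZF : {n | ∃ S : Set V, S.ncard = n ∧ IsZeroForcingSet G S}.Nonempty :=
    ⟨_, Set.univ, rfl, .refl⟩
  apply le_antisymm
  · obtain ⟨S, hcard, hS⟩ := Nat.sInf_mem hZF
    exact (Nat.sInf_le (zqWinFrom_empty_of_isZeroForcingSet hS)).trans_eq hcard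
  · have hwin : ZqWinFrom G q ∅ (qZeroForcingNumber G q) :=
      Nat.sInf_mem ⟨_, zqWinFrom_empty_of_isZeroForcingSet (S := Set.univ) .refl⟩
    obtain ⟨S, hcard, hS⟩ := hwin.exists_isPSDForcingSet
    rw [Set.empty_union] at hS
    have hZ : zeroForcingNumber G ≤ S.ncard :=
      Nat.sInf_le ⟨S, rfl, hS.isZeroForcingSet hG hbig⟩
    exact hZ.trans hcard

end ZqForcing
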